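/- Let 𝓛 be the set of BMS transformations with data of the form (M, 0) (the 'Lorentz' elements) and 𝓢 the supertranslations. Then 𝓛 is a subgroup of 𝓑 with 𝓛 ∩ 𝓢 = {identity}, and every element b ∈ 𝓑 admits a unique factorization b = Λ ∘ s with Λ ∈ 𝓛 and s ∈ 𝓢; explicitly, the BMS transformation with data (M, α) equals the composite of the element with data (M, 0) after the supertranslation with data (1, α). -/

import Mathlib

noncomputable section

open Matrix

/-- `SL(2, ℂ)`. -/
abbrev SL2C := Matrix.SpecialLinearGroup (Fin 2) ℂ

/-- The complex projective line `ℙ¹(ℂ)`, the projectivization of `ℂ²`. -/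
abbrev P1C := Projectivization ℂ (Fin 2 → ℂ)

instance : Fact (Even (Fintype.card (Fin 2))) := ⟨⟨1, rfl⟩⟩

/-- The squared standard Hermitian norm `‖v‖²` of `v ∈ ℂ²`. -/
def hermNormSq (v : Fin 2 → ℂ) : ℝ := (star v ⬝ᵥ v).re

theorem SL2C.mulVec_ne_zero (M : SL2C) {v : Fin 2 → ℂ} (hv : v ≠ 0) :
    (M : Matrix (Fin 2) (Fin 2) ℂ).mulVec v ≠ 0 := by
  intro h
  apply hv
  have hMM : ((M⁻¹ : SL2C) : Matrix (Fin 2) (Fin 2) ℂ) * (M : Matrix (Fin 2) (Fin 2) ℂ) = 1 := by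
    rw [← Matrix.SpecialLinearGroup.coe_mul, inv_mul_cancel,
      Matrix.SpecialLinearGroup.coe_one]
  calc v = (((M⁻¹ : SL2C) : Matrix (Fin 2) (Fin 2) ℂ) *
          (M : Matrix (Fin 2) (Fin 2) ℂ)).mulVec v := by rw [hMM, Matrix.one_mulVec]
    _ = ((M⁻¹ : SL2C) : Matrix (Fin 2) (Fin 2) ℂ).mulVec
          ((M : Matrix (Fin 2) (Fin 2) ℂ).mulVec v) := by rw [Matrix.mulVec_mulVec]
    _ = 0 := by rw [h, Matrix.mulVec_zero]

/-- The action of `SL(2, ℂ)` on `ℙ¹(ℂ)`: `M • [v] = [M v]`. -/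
def mobAct (M : SL2C) (p : P1C) : P1C :=
  Projectivization.mk ℂ ((M : Matrix (Fin 2) (Fin 2) ℂ).mulVec p.rep)
    (SL2C.mulVec_ne_zero M p.rep_nonzero)

/-- The conformal factor `K_M : ℙ¹(ℂ) → ℝ`, `K_M([v]) = ‖v‖² / ‖M v‖²`. -/
def Kconf (M : SL2C) (p : P1C) : ℝ :=
  hermNormSq p.rep / hermNormSq ((M : Matrix (Fin 2) (Fin 2) ℂ).mulVec p.rep)

/-- The BMS transformation with data `(M, α)`:
`(p, u) ↦ (M • p, K_M(p)·(u + α(p)))`. -/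
def bms (M : SL2C) (α : P1C → ℝ) : P1C × ℝ → P1C × ℝ :=
  fun q => (mobAct M q.1, Kconf M q.1 * (q.2 + α q.1))

/-- `σ_M(α)(p) = K_M(p)⁻¹ · α(M • p)`. -/
def sigmaAct (M : SL2C) (α : P1C → ℝ) : P1C → ℝ :=
  fun p => (Kconf M p)⁻¹ * α (mobAct M p)

/-- The BMS group `𝓑`, as the set of all BMS transformations. -/
def BMSSet : Set ((P1C × ℝ) → (P1C × ℝ)) := {f | ∃ M α, f = bms M α}

/-- The supertranslations `𝓢`: BMS transformations with data `(1, α)`. -/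
def Supertranslations : Set ((P1C × ℝ) → (P1C × ℝ)) := {f | ∃ α, f = bms 1 α}

/-- The 'Lorentz' elements `𝓛`: BMS transformations with data `(M, 0)`. -/
def LorentzSet : Set ((P1C × ℝ) → (P1C × ℝ)) := {f | ∃ M, f = bms M 0}

/-- The translation function `α_H([v]) = (vᴴ H v)/‖v‖²` attached to a Hermitian matrix `H`. -/
def transl (H : Matrix (Fin 2) (Fin 2) ℂ) : P1C → ℝ :=
  fun p => (star p.rep ⬝ᵥ H.mulVec p.rep).re / hermNormSq p.rep

/-- `α : ℙ¹(ℂ) → ℝ` is a translation if `α = α_H` for some Hermitian `H`. -/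
def IsTranslationFn (α : P1C → ℝ) : Prop :=
  ∃ H : Matrix (Fin 2) (Fin 2) ℂ, H.IsHermitian ∧ α = transl H

/-- The translation subgroup `𝓣`: BMS transformations with data `(±1, α_H)`. -/
def TranslSet : Set ((P1C × ℝ) → (P1C × ℝ)) :=
  {f | ∃ (M : SL2C) (α : P1C → ℝ), (M = 1 ∨ M = -1) ∧ IsTranslationFn α ∧ f = bms M α}

/-- `PSL(2, ℂ)`, the quotient of `SL(2, ℂ)` by its center `{1, -1}`. -/
abbrev PSL2C := SL2C ⧸ Subgroup.center SL2C

/-- The good cut of a translation: the graph of `α_H` in `ℙ¹(ℂ) × ℝ`. -/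
def goodCut (H : Matrix (Fin 2) (Fin 2) ℂ) : Set (P1C × ℝ) :=
  {q | q.2 = transl H q.1}

/-! The conformal factor is a cocycle, `K_{MN}(p) = K_M(N • p) · K_N(p)`, which gives the
composition law `(M, α) ∘ (N, β) = (MN, β + σ_N(α))`. With `σ_M(0) = 0` and `σ_1(α) = α`, this
makes the Lorentz elements closed under composition and inverses and yields
`(M, α) = (M, 0) ∘ (1, α)`. Uniqueness holds because a BMS transformation determines its
function `α`: at `u = -β(p)` the identity `K_M(p)(u + α(p)) = K_N(p)(u + β(p))` reads
`K_M(p)(α(p) - β(p)) = 0`, and `K_M > 0`. Supertranslations are invertible, so they can then be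
cancelled on the right. -/

open scoped ComplexOrder

lemma hermNormSq_pos {v : Fin 2 → ℂ} (hv : v ≠ 0) : 0 < hermNormSq v :=
  (Complex.pos_iff.mp (dotProduct_star_self_pos_iff.mpr hv)).1

lemma hermNormSq_smul (c : ℂ) (v : Fin 2 → ℂ) :
    hermNormSq (c • v) = Complex.normSq c * hermNormSq v := by
  rw [hermNormSq, star_smul, smul_dotProduct, dotProduct_smul, smul_smul, smul_eq_mul,
    Complex.star_def, ← Complex.normSq_eq_conj_mul_self, Complex.re_ofReal_mul, hermNormSq]

lemma mobAct_mk (M : SL2C) {w : Fin 2 → ℂ} (hw : w ≠ 0) :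
    mobAct M (Projectivization.mk ℂ w hw) =
      Projectivization.mk ℂ ((M : Matrix (Fin 2) (Fin 2) ℂ) *ᵥ w) (SL2C.mulVec_ne_zero M hw) := by
  obtain ⟨a, ha⟩ := Projectivization.exists_smul_eq_mk_rep ℂ w hw
  refine (Projectivization.mk_eq_mk_iff ℂ _ _ _ _).mpr ⟨a, ?_⟩
  rw [← ha, Units.smul_def, Units.smul_def, mulVec_smul]

lemma Kconf_mk (M : SL2C) {w : Fin 2 → ℂ} (hw : w ≠ 0) :
    Kconf M (Projectivization.mk ℂ w hw) =
      hermNormSq w / hermNormSq ((M : Matrix (Fin 2) (Fin 2) ℂ) *ᵥ w) := by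
  obtain ⟨a, ha⟩ := Projectivization.exists_smul_eq_mk_rep ℂ w hw
  have ha₀ : Complex.normSq (a : ℂ) ≠ 0 := Complex.normSq_eq_zero.not.mpr a.ne_zero
  rw [Kconf, ← ha, Units.smul_def, mulVec_smul, hermNormSq_smul, hermNormSq_smul,
    mul_div_mul_left _ _ ha₀]

lemma Kconf_pos (M : SL2C) (p : P1C) : 0 < Kconf M p :=
  div_pos (hermNormSq_pos p.rep_nonzero) (hermNormSq_pos (SL2C.mulVec_ne_zero M p.rep_nonzero))

@[simp]
lemma mobAct_one (p : P1C) : mobAct 1 p = p := by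
  unfold mobAct
  simp only [Matrix.SpecialLinearGroup.coe_one, one_mulVec, Projectivization.mk_rep]

@[simp]
lemma Kconf_one (p : P1C) : Kconf 1 p = 1 := by
  unfold Kconf
  simp only [Matrix.SpecialLinearGroup.coe_one, one_mulVec]
  exact div_self (hermNormSq_pos p.rep_nonzero).ne'

lemma mobAct_mul (M N : SL2C) (p : P1C) : mobAct (M * N) p = mobAct M (mobAct N p) := by
  rw [show mobAct N p = Projectivization.mk ℂ _ (SL2C.mulVec_ne_zero N p.rep_nonzero) from rfl,
    mobAct_mk]
  unfold mobAct
  congr 1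
  rw [Matrix.SpecialLinearGroup.coe_mul, mulVec_mulVec]

lemma Kconf_mul (M N : SL2C) (p : P1C) :
    Kconf (M * N) p = Kconf M (mobAct N p) * Kconf N p := by
  have hp := (hermNormSq_pos p.rep_nonzero).ne'
  have hNp := (hermNormSq_pos (SL2C.mulVec_ne_zero N p.rep_nonzero)).ne'
  unfold mobAct
  rw [Kconf_mk]
  unfold Kconf
  rw [Matrix.SpecialLinearGroup.coe_mul, ← mulVec_mulVec]
  field_simp

@[simp]
lemma sigmaAct_zero (M : SL2C) : sigmaAct M 0 = 0 := by
  ext p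
  simp [sigmaAct]

@[simp]
lemma sigmaAct_one (α : P1C → ℝ) : sigmaAct 1 α = α := by
  ext p
  simp [sigmaAct]

lemma bms_comp (M N : SL2C) (α β : P1C → ℝ) :
    bms M α ∘ bms N β = bms (M * N) (β + sigmaAct N α) := by
  funext q
  have hK := (Kconf_pos N q.1).ne'
  refine Prod.ext (mobAct_mul M N q.1).symm ?_
  simp only [bms, Function.comp_apply, sigmaAct, Pi.add_apply, Kconf_mul]
  field_simp
  ring

lemma bms_one_zero : bms 1 0 = id := by
  funext q
  simp [bms]

lemma bms_zero_comp_bms_zero (M N : SL2C) : bms M 0 ∘ bms N 0 = bms (M * N) 0 := by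
  rw [bms_comp, sigmaAct_zero, add_zero]

lemma bms_eq_bms_zero_comp_bms_one (M : SL2C) (α : P1C → ℝ) :
    bms M α = bms M 0 ∘ bms 1 α := by
  rw [bms_comp, mul_one, sigmaAct_one, add_zero]

lemma bms_one_surjective (α : P1C → ℝ) : Function.Surjective (bms 1 α) := by
  have hinv : bms 1 α ∘ bms 1 (-α) = id := by
    rw [bms_comp, mul_one, sigmaAct_one, neg_add_cancel, bms_one_zero]
  exact Function.RightInverse.surjective (congrFun hinv)

lemma eq_of_bms_eq_bms {M N : SL2C} {α β : P1C → ℝ} (h : bms M α = bms N β) : α = β := by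
  funext p
  have hp := congrArg Prod.snd (congrFun h (p, -β p))
  simp only [bms, neg_add_cancel, mul_zero] at hp
  have := (mul_eq_zero.mp hp).resolve_left (Kconf_pos M p).ne'
  linarith

lemma bms_zero_comp_bms_one_inj {M N : SL2C} {α β : P1C → ℝ} :
    bms M 0 ∘ bms 1 α = bms N 0 ∘ bms 1 β ↔ bms M 0 = bms N 0 ∧ α = β := by
  refine ⟨fun h ↦ ?_, fun ⟨hΛ, hαβ⟩ ↦ by rw [hΛ, hαβ]⟩
  have hαβ : α = β := by
    rw [← bms_eq_bms_zero_comp_bms_one, ← bms_eq_bms_zero_comp_bms_one] at h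
    exact eq_of_bms_eq_bms h
  subst hαβ
  exact ⟨(bms_one_surjective α).injective_comp_right h, rfl⟩

/-- The Lorentz elements `𝓛` (data `(M, 0)`) form a subgroup of `𝓑` with
`𝓛 ∩ 𝓢 = {id}`, and every `b ∈ 𝓑` factors uniquely as `b = Λ ∘ s` with `Λ ∈ 𝓛`,
`s ∈ 𝓢`; explicitly, the BMS transformation with data `(M, α)` is the composite of the
element with data `(M, 0)` after the supertranslation with data `(1, α)`. -/
theorem lorentz_supertranslation_factorization :
    (id ∈ LorentzSet) ∧
    (∀ f ∈ LorentzSet, ∀ g ∈ LorentzSet, f ∘ g ∈ LorentzSet) ∧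
    (∀ f ∈ LorentzSet, ∃ g ∈ LorentzSet, g ∘ f = id ∧ f ∘ g = id) ∧
    (LorentzSet ∩ Supertranslations = {id}) ∧
    (∀ b ∈ BMSSet, ∃! Λs : ((P1C × ℝ) → (P1C × ℝ)) × ((P1C × ℝ) → (P1C × ℝ)),
      Λs.1 ∈ LorentzSet ∧ Λs.2 ∈ Supertranslations ∧ b = Λs.1 ∘ Λs.2) ∧
    (∀ (M : SL2C) (α : P1C → ℝ), bms M α = (bms M 0) ∘ (bms 1 α)) := by
  refine ⟨⟨1, bms_one_zero.symm⟩, ?_, ?_, ?_, ?_, bms_eq_bms_zero_comp_bms_one⟩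
  · rintro _ ⟨M, rfl⟩ _ ⟨N, rfl⟩
    exact ⟨M * N, bms_zero_comp_bms_zero M N⟩
  · rintro _ ⟨M, rfl⟩
    refine ⟨bms M⁻¹ 0, ⟨M⁻¹, rfl⟩, ?_, ?_⟩ <;>
      simp only [bms_zero_comp_bms_zero, inv_mul_cancel, mul_inv_cancel, bms_one_zero]
  · ext f
    constructor
    · rintro ⟨⟨M, rfl⟩, α, h⟩
      rw [h, ← eq_of_bms_eq_bms h, bms_one_zero]
      rfl
    · rintro rfl
      exact ⟨⟨1, bms_one_zero.symm⟩, 0, bms_one_zero.symm⟩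
  · rintro b ⟨M, α, rfl⟩
    refine ⟨(bms M 0, bms 1 α), ⟨⟨M, rfl⟩, ⟨α, rfl⟩, bms_eq_bms_zero_comp_bms_one M α⟩, ?_⟩
    rintro ⟨_, _⟩ ⟨⟨N, rfl⟩, ⟨β, rfl⟩, h⟩
    obtain ⟨hΛ, hs⟩ :=
      bms_zero_comp_bms_one_inj.mp ((bms_eq_bms_zero_comp_bms_one M α).symm.trans h)
    rw [hΛ, hs]
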